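/- arXiv:2405.02182 — 2 statements merged into one kernel-verified Lean document; each statement's English description precedes it below -/
import Mathlib

section
/- Let Γa and Γb be nonnegative real numbers. Then Γa·Γb·(19 + 12·(Γa + Γb)) + (Γa − 1)² + (Γb − 1)² ≥ 1. -/
theorem mul_mul_add_sq_sub_one_add_sq_sub_one_eq {R : Type*} [CommRing R] (a b : R) :
    a * b * (19 + 12 * (a + b)) + (a - 1) ^ 2 + (b - 1) ^ 2 =
      1 + (a + b - 1) ^ 2 + a * b * (17 + 12 * (a + b)) := by
  ring

theorem stmt_0 (Γa Γb : ℝ) (ha : 0 ≤ Γa) (hb : 0 ≤ Γb) :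
    Γa * Γb * (19 + 12 * (Γa + Γb)) + (Γa - 1) ^ 2 + (Γb - 1) ^ 2 ≥ 1 := by
  rw [mul_mul_add_sq_sub_one_add_sq_sub_one_eq, ge_iff_le, add_assoc, le_add_iff_nonneg_right]
  positivity
end

section
/- Let a₀, a₁, a₂ be positive real numbers with a₂·a₁ > a₀. Then every complex root z of the polynomial z³ + a₂·z² + a₁·z + a₀ has strictly negative real part. -/
theorem stmt_3 (a₀ a₁ a₂ : ℝ) (h0 : 0 < a₀) (h1 : 0 < a₁) (h2 : 0 < a₂)
    (hrh : a₂ * a₁ > a₀) :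
    ∀ z : ℂ, z ^ 3 + (a₂ : ℂ) * z ^ 2 + (a₁ : ℂ) * z + (a₀ : ℂ) = 0 → z.re < 0 := by
  intro z hz
  by_contra h
  push_neg at h
  have hre := congrArg Complex.re hz
  have him := congrArg Complex.im hz
  simp only [pow_succ, pow_zero, one_mul, Complex.add_re, Complex.add_im,
    Complex.mul_re, Complex.mul_im, Complex.ofReal_re, Complex.ofReal_im,
    Complex.zero_re, Complex.zero_im] at hre him
  rcases eq_or_ne z.im 0 with hy | hy
  · rw [hy] at hre
    nlinarith [mul_nonneg (mul_nonneg h h) h, mul_nonneg h1.le h,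
      mul_nonneg h2.le (mul_nonneg h h)]
  · have hfac : z.im * (3 * z.re ^ 2 - z.im ^ 2 + 2 * a₂ * z.re + a₁) = 0 := by
      nlinarith [him]
    have hkey : 3 * z.re ^ 2 - z.im ^ 2 + 2 * a₂ * z.re + a₁ = 0 :=
      (mul_eq_zero.mp hfac).resolve_left hy
    nlinarith [hre, mul_nonneg (mul_nonneg h h) h, mul_nonneg h2.le (mul_nonneg h h),
      mul_nonneg h1.le h, mul_nonneg (mul_nonneg h2.le h2.le) h]
end
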